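/- Let k ≥ 1 be an integer, let χ = [0, 2k] × [0, 2k] ⊆ ℝ², and let Q be a finite set of points in ℝ² such that every point of Q ∩ χ has some other point of Q at Euclidean distance at most 1 from it. Then there exists a subset T ⊆ Q with |T| ≤ 2·⌈2√2·k⌉² such that every point p ∈ Q ∩ χ has some point t ∈ T with t ≠ p and dist(p, t) ≤ 1. -/

import Mathlib

/-!
Cut the square into `N × N` congruent cells with `N = ⌈2√2 k⌉`, so that each cell has side at
most `1/√2` and hence diameter at most `1`. In every cell meeting `Q ∩ χ` pick one such point
`r` together with a neighbour of `r` in `Q`. Every other point of the cell is within distance `1`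
of `r`, and `r` itself is dominated by its neighbour, so these at most `2 N²` points totally
dominate `Q ∩ χ`.
-/

open scoped Classical

open Finset

def TotallyDominates {α : Type*} (adj : α → α → Prop) (T S : Finset α) : Prop :=
  ∀ p ∈ S, ∃ t ∈ T, t ≠ p ∧ adj p t

theorem TotallyDominates.exists_subset_card_le_two_mul {α β : Type*} {adj : α → α → Prop}
    {Q S : Finset α} (hQ : TotallyDominates adj Q S) (hSQ : S ⊆ Q)
    {C : Finset β} {f : α → β} (hf : Set.MapsTo f S C)
    (hcell : ∀ p ∈ S, ∀ q ∈ S, f p = f q → adj p q) :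
    ∃ T ⊆ Q, #T ≤ 2 * #C ∧ TotallyDominates adj T S := by
  choose! m hmQ hmne hmadj using hQ
  obtain ⟨R, hRS, hRinj, hRimg⟩ :=
    exists_subset_injOn_image_eq_of_surjOn (S : Set α) (S.image f)
      (by rw [coe_image]; exact Set.surjOn_image f S)
  replace hRS : R ⊆ S := mod_cast hRS
  refine ⟨R ∪ R.image m,
    union_subset (hRS.trans hSQ) (image_subset_iff.2 fun r hr => hmQ r (hRS hr)), ?_, ?_⟩
  · calc #(R ∪ R.image m) ≤ #R + #R :=
          (card_union_le _ _).trans (Nat.add_le_add_left card_image_le _)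
      _ = 2 * #(S.image f) := by rw [← card_image_of_injOn hRinj, hRimg, two_mul]
      _ ≤ 2 * #C := Nat.mul_le_mul_left 2 (card_le_card (image_subset_iff.2 hf))
  · intro p hp
    obtain ⟨r, hr, hrp⟩ : ∃ r ∈ R, f r = f p := by
      rw [← mem_image, hRimg]; exact mem_image_of_mem f hp
    by_cases hr_eq : r = p
    · subst hr_eq
      exact ⟨m r, mem_union_right _ (mem_image_of_mem m hr), hmne r hp, hmadj r hp⟩
    · exact ⟨r, mem_union_left _ hr, hr_eq, hcell p hp r (hRS hr) hrp.symm⟩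

theorem EuclideanSpace.dist_le_sqrt_card_mul {ι : Type*} [Fintype ι] {x y : EuclideanSpace ℝ ι}
    {δ : ℝ} (hδ : 0 ≤ δ) (h : ∀ i, dist (x i) (y i) ≤ δ) :
    dist x y ≤ √(Fintype.card ι) * δ := by
  rw [EuclideanSpace.dist_eq]
  calc √(∑ i, dist (x i) (y i) ^ 2) ≤ √(Fintype.card ι * δ ^ 2) := by
        gcongr
        simpa using sum_le_card_nsmul univ _ _ fun i _ => pow_le_pow_left₀ dist_nonneg (h i) 2
    _ = √(Fintype.card ι) * δ := by rw [Real.sqrt_mul (by positivity), Real.sqrt_sq hδ]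

-- Taking `min … (N - 1)` puts the right endpoint `N δ` into the last of the `N` cells.
noncomputable def gridIndex (δ : ℝ) (N : ℕ) (x : ℝ) : ℕ := min ⌊x / δ⌋₊ (N - 1)

section gridIndex

variable {δ x : ℝ} {N : ℕ}

theorem gridIndex_lt (hN : 0 < N) : gridIndex δ N x < N :=
  (min_le_right _ _).trans_lt (Nat.sub_lt hN one_pos)

theorem gridIndex_mul_le (hδ : 0 < δ) (hx : 0 ≤ x) : gridIndex δ N x * δ ≤ x :=
  calc (gridIndex δ N x : ℝ) * δ ≤ ⌊x / δ⌋₊ * δ := by gcongr; exact min_le_left _ _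
    _ ≤ x / δ * δ := by gcongr; exact Nat.floor_le (by positivity)
    _ = x := div_mul_cancel₀ x hδ.ne'

theorem le_gridIndex_add_one_mul (hδ : 0 < δ) (hN : 0 < N) (hx : x ≤ N * δ) :
    x ≤ (gridIndex δ N x + 1) * δ := by
  rcases min_choice ⌊x / δ⌋₊ (N - 1) with h | h <;> rw [gridIndex, h]
  · calc x = x / δ * δ := (div_mul_cancel₀ x hδ.ne').symm
      _ ≤ _ := by gcongr; exact (Nat.lt_floor_add_one _).le
  · rwa [Nat.cast_pred hN, sub_add_cancel]

theorem abs_sub_le_of_gridIndex_eq {y : ℝ} (hδ : 0 < δ) (hN : 0 < N)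
    (hx : x ∈ Set.Icc 0 (N * δ)) (hy : y ∈ Set.Icc 0 (N * δ))
    (h : gridIndex δ N x = gridIndex δ N y) : |x - y| ≤ δ := by
  have hx₁ := gridIndex_mul_le (N := N) hδ hx.1
  have hx₂ := le_gridIndex_add_one_mul hδ hN hx.2
  have hy₁ := gridIndex_mul_le (N := N) hδ hy.1
  have hy₂ := le_gridIndex_add_one_mul hδ hN hy.2
  rw [h] at hx₁ hx₂
  rw [abs_le]
  constructor <;> linarith

end gridIndex

section gridCell

variable {ι : Type*} [Fintype ι] {δ : ℝ} {N : ℕ}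

noncomputable def gridCell (δ : ℝ) (N : ℕ) (p : EuclideanSpace ℝ ι) : ι → ℕ :=
  fun i => gridIndex δ N (p i)

theorem gridCell_mem_piFinset (hN : 0 < N) (p : EuclideanSpace ℝ ι) :
    gridCell δ N p ∈ Fintype.piFinset fun _ : ι => range N :=
  Fintype.mem_piFinset.2 fun _ => mem_range.2 (gridIndex_lt hN)

theorem dist_le_of_gridCell_eq (hδ : 0 < δ) (hN : 0 < N) {p q : EuclideanSpace ℝ ι}
    (hp : ∀ i, p i ∈ Set.Icc 0 (N * δ)) (hq : ∀ i, q i ∈ Set.Icc 0 (N * δ))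
    (h : gridCell δ N p = gridCell δ N q) : dist p q ≤ √(Fintype.card ι) * δ :=
  EuclideanSpace.dist_le_sqrt_card_mul hδ.le fun i =>
    (Real.dist_eq _ _).trans_le (abs_sub_le_of_gridIndex_eq hδ hN (hp i) (hq i) (congrFun h i))

end gridCell

/-- For an integer `k ≥ 1` and the square `χ = [0, 2k] × [0, 2k]`, if `Q` is a
finite planar point set such that every point of `Q ∩ χ` has another point of `Q` at
distance at most 1, then some `T ⊆ Q` with `|T| ≤ 2·⌈2√2·k⌉²` totally dominates all points
of `Q ∩ χ` in the unit disk graph sense. -/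
theorem exists_small_tds_for_square
    (k : ℕ) (hk : 1 ≤ k) (Q : Finset (EuclideanSpace ℝ (Fin 2)))
    (hNoIso : ∀ p ∈ Q,
      (p 0 ∈ Set.Icc (0 : ℝ) (2 * k) ∧ p 1 ∈ Set.Icc (0 : ℝ) (2 * k)) →
      ∃ q ∈ Q, q ≠ p ∧ dist p q ≤ 1) :
    ∃ T ⊆ Q, T.card ≤ 2 * (⌈2 * Real.sqrt 2 * k⌉₊) ^ 2 ∧
      ∀ p ∈ Q,
        (p 0 ∈ Set.Icc (0 : ℝ) (2 * k) ∧ p 1 ∈ Set.Icc (0 : ℝ) (2 * k)) →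
        ∃ t ∈ T, t ≠ p ∧ dist p t ≤ 1 := by
  set N := ⌈2 * √2 * k⌉₊
  have hk₀ : (0 : ℝ) < k := by exact_mod_cast hk
  have hN : 0 < N := Nat.ceil_pos.2 (by positivity)
  set δ : ℝ := 2 * k / N
  have hδ : 0 < δ := by positivity
  have hside : (N : ℝ) * δ = 2 * k := mul_div_cancel₀ _ (by positivity)
  have hdiam : √(Fintype.card (Fin 2)) * δ ≤ 1 := by
    rw [Fintype.card_fin, Nat.cast_ofNat, ← mul_div_assoc, div_le_one (by positivity)]
    calc √2 * (2 * k) = 2 * √2 * k := by ring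
      _ ≤ N := Nat.le_ceil _
  set S := Q.filter fun p => p 0 ∈ Set.Icc (0 : ℝ) (2 * k) ∧ p 1 ∈ Set.Icc (0 : ℝ) (2 * k)
  have hS : ∀ p ∈ S, ∀ i, p i ∈ Set.Icc 0 (N * δ) := by
    intro p hp i
    rw [hside]
    fin_cases i
    exacts [(mem_filter.1 hp).2.1, (mem_filter.1 hp).2.2]
  obtain ⟨T, hTQ, hcard, hT⟩ := TotallyDominates.exists_subset_card_le_two_mul
    (adj := fun p q => dist p q ≤ 1)
    (fun p hp => hNoIso p (mem_filter.1 hp).1 (mem_filter.1 hp).2)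
    (filter_subset _ Q) (fun p _ => gridCell_mem_piFinset hN p)
    fun p hp q hq h => (dist_le_of_gridCell_eq hδ hN (hS p hp) (hS q hq) h).trans hdiam
  refine ⟨T, hTQ, by simpa using hcard, fun p hp hpχ => hT p (mem_filter.2 ⟨hp, hpχ⟩)⟩
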